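/- arXiv:1702.01915 — 4 statements merged into one kernel-verified Lean document; each statement's English description precedes it below -/
import Mathlib

section
/- Let α and β be two irrational real numbers in (0,1) with continued fraction expansions α = [0; a₁, a₂, …] and β = [0; b₁, b₂, …], and let pₖ/qₖ denote the convergents of β. Suppose n ≥ 1 is such that aᵢ = bᵢ for i = 1, …, n−1 but aₙ ≠ bₙ. Then |α − β| ≥ 1/(72 · qₙ² · b_{n+1} · b_{n+2}) ≥ 1/(72 · qₙ · q_{n+2}). -/
/-! If the two expansions agree before index `n`, then `α` and `β` are the images of their
complete quotients `X = [aₙ; aₙ₊₁, …]` and `Y = [bₙ; bₙ₊₁, …]` under one Möbius map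
`t ↦ (t pₙ₋₁ + pₙ₋₂) / (t qₙ₋₁ + qₙ₋₂)` of determinant `±1`, so
`|α - β| = |X - Y| / ((X qₙ₋₁ + qₙ₋₂) (Y qₙ₋₁ + qₙ₋₂))`.
As `aₙ ≠ bₙ`, one of the integers `bₙ`, `bₙ + 1` separates `X` from `Y`, and `Y` is at distance
more than `1 / (bₙ₊₁ + 1)` from `bₙ` and more than `1 / ((bₙ₊₁ + 1)(bₙ₊₂ + 1))` from `bₙ + 1`.
When `X > Y` the denominator grows with `X`, but `(X qₙ₋₁ + qₙ₋₂) / (X - Y)` decreases in `X`,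
so the worst case is `X = bₙ + 1`. -/

def IsCFOf (α : ℝ) (a : ℕ → ℤ) : Prop :=
  ∃ x : ℕ → ℝ, x 0 = α ∧ (∀ n, a n = ⌊x n⌋) ∧ ∀ n, x (n + 1) = 1 / (x n - ⌊x n⌋)

def IsConvergentsOf (a : ℕ → ℤ) (p q : ℕ → ℤ) : Prop :=
  p 0 = 1 ∧ p 1 = a 0 ∧ (∀ n, p (n + 2) = a (n + 1) * p (n + 1) + p n) ∧
  q 0 = 0 ∧ q 1 = 1 ∧ (∀ n, q (n + 2) = a (n + 1) * q (n + 1) + q n)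

/-- `x k` is the `k`-th complete quotient `[c k; c (k + 1), …]` of the irrational number `γ`. -/
structure IsCompleteQuotients (γ : ℝ) (c : ℕ → ℤ) (x : ℕ → ℝ) : Prop where
  zero : x 0 = γ
  floor_lt : ∀ k, (c k : ℝ) < x k
  lt_floor_add_one : ∀ k, x k < c k + 1
  succ_mul_sub : ∀ k, x (k + 1) * (x k - c k) = 1

theorem IsCFOf.exists_isCompleteQuotients {γ : ℝ} {c : ℕ → ℤ} (hcf : IsCFOf γ c)
    (hγ : Irrational γ) : ∃ x, IsCompleteQuotients γ c x := by
  obtain ⟨x, hx0, hfloor, hsucc⟩ := hcf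
  have hirr : ∀ k, Irrational (x k) := by
    intro k
    induction k with
    | zero => rwa [hx0]
    | succ k ih => rw [hsucc k, one_div]; exact (ih.sub_intCast _).inv
  have hfract : ∀ k, x k - ⌊x k⌋ ≠ 0 := fun k h => (hirr k).ne_int ⌊x k⌋ (by linarith)
  refine ⟨x, hx0, fun k => ?_, fun k => ?_, fun k => ?_⟩
  · rw [hfloor k]
    exact (Int.floor_le _).lt_of_ne ((hirr k).ne_int _).symm
  · rw [hfloor k]
    exact Int.lt_floor_add_one _
  · rw [hsucc k, hfloor k]
    exact one_div_mul_cancel (hfract k)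

namespace IsCompleteQuotients

variable {γ : ℝ} {c : ℕ → ℤ} {x : ℕ → ℝ}

lemma one_lt_succ (hx : IsCompleteQuotients γ c x) (k : ℕ) : 1 < x (k + 1) := by
  have h := hx.succ_mul_sub k
  nlinarith [hx.floor_lt k, hx.lt_floor_add_one k]

lemma one_le_succ (hx : IsCompleteQuotients γ c x) (k : ℕ) : 1 ≤ c (k + 1) := by
  have : (0 : ℝ) < c (k + 1) := by linarith [hx.one_lt_succ k, hx.lt_floor_add_one (k + 1)]
  exact_mod_cast this

lemma eq_zero_of_mem_Ioo (hx : IsCompleteQuotients γ c x) (hγ : γ ∈ Set.Ioo 0 1) : c 0 = 0 := by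
  have h₁ : (c 0 : ℝ) < 1 := by linarith [hx.floor_lt 0, hx.zero, hγ.2]
  have h₂ : (0 : ℝ) < c 0 + 1 := by linarith [hx.lt_floor_add_one 0, hx.zero, hγ.1]
  have : c 0 < 1 := by exact_mod_cast h₁
  have : 0 < c 0 + 1 := by exact_mod_cast h₂
  omega

lemma one_lt_sub_mul (hx : IsCompleteQuotients γ c x) (k : ℕ) :
    1 < (x k - c k) * ((c (k + 1) : ℝ) + 1) := by
  have := mul_lt_mul_of_pos_left (hx.lt_floor_add_one (k + 1)) (sub_pos.2 (hx.floor_lt k))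
  linarith [hx.succ_mul_sub k]

lemma one_lt_add_one_sub_mul (hx : IsCompleteQuotients γ c x) (k : ℕ) :
    1 < (c k + 1 - x k) * (((c (k + 1) : ℝ) + 1) * ((c (k + 2) : ℝ) + 1)) := by
  have hc : (1 : ℝ) ≤ c (k + 1) := by exact_mod_cast hx.one_le_succ k
  have hc' : (1 : ℝ) ≤ c (k + 2) := by exact_mod_cast hx.one_le_succ (k + 1)
  have hfrac : 0 ≤ c k + 1 - x k := by linarith [hx.lt_floor_add_one k]
  calc 1 < (x (k + 1) - c (k + 1)) * ((c (k + 2) : ℝ) + 1) := hx.one_lt_sub_mul (k + 1)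
    _ ≤ (x (k + 1) - 1) * ((c (k + 2) : ℝ) + 1) := by gcongr
    _ = (c k + 1 - x k) * x (k + 1) * ((c (k + 2) : ℝ) + 1) := by
        linear_combination ((c (k + 2) : ℝ) + 1) * hx.succ_mul_sub k
    _ ≤ (c k + 1 - x k) * ((c (k + 1) : ℝ) + 1) * ((c (k + 2) : ℝ) + 1) := by
        gcongr
        exact (hx.lt_floor_add_one (k + 1)).le
    _ = _ := by ring

end IsCompleteQuotients

namespace IsConvergentsOf

variable {a p q : ℕ → ℤ}

lemma q_nonneg_and_le_succ (h : IsConvergentsOf a p q) (ha : ∀ k, 1 ≤ a (k + 1)) (k : ℕ) :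
    0 ≤ q k ∧ q k ≤ q (k + 1) := by
  obtain ⟨-, -, -, hq₀, hq₁, hq⟩ := h
  induction k with
  | zero => simp [hq₀, hq₁]
  | succ k ih =>
    refine ⟨by omega, ?_⟩
    rw [hq k]
    nlinarith [ha k]

lemma q_monotone (h : IsConvergentsOf a p q) (ha : ∀ k, 1 ≤ a (k + 1)) : Monotone q :=
  monotone_nat_of_le_succ fun k => (h.q_nonneg_and_le_succ ha k).2

lemma one_le_q_succ (h : IsConvergentsOf a p q) (ha : ∀ k, 1 ≤ a (k + 1)) (k : ℕ) :
    1 ≤ q (k + 1) :=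
  h.2.2.2.2.1 ▸ h.q_monotone ha (Nat.le_add_left 1 k)

lemma det (h : IsConvergentsOf a p q) (k : ℕ) :
    p (k + 1) * q k - p k * q (k + 1) = (-1) ^ (k + 1) := by
  obtain ⟨hp₀, hp₁, hp, hq₀, hq₁, hq⟩ := h
  induction k with
  | zero => rw [hp₀, hq₀, hq₁]; ring
  | succ k ih => rw [hp k, hq k, pow_succ]; linear_combination -ih

lemma q_mul_mul_le (h : IsConvergentsOf a p q) (ha : ∀ k, 1 ≤ a (k + 1)) (k : ℕ) :
    q (k + 1) * a (k + 1) * a (k + 2) ≤ q (k + 3) := by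
  have hq := h.2.2.2.2.2
  have hq₀ := (h.q_nonneg_and_le_succ ha k).1
  have hq₁ := (h.q_nonneg_and_le_succ ha (k + 1)).1
  rw [hq (k + 1), hq k]
  nlinarith [ha k, ha (k + 1)]

lemma mul_denom_eq {b : ℕ → ℤ} {α : ℝ} {x : ℕ → ℝ} (h : IsConvergentsOf b p q)
    (hx : IsCompleteQuotients α a x) {k : ℕ} (hab : ∀ i ≤ k, a i = b i) :
    α * (x (k + 1) * q (k + 1) + q k) = x (k + 1) * p (k + 1) + p k := by
  obtain ⟨hp₀, hp₁, hp, hq₀, hq₁, hq⟩ := h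
  induction k with
  | zero =>
    have := hx.succ_mul_sub 0
    rw [hx.zero, hab 0 le_rfl] at this
    rw [hp₀, hp₁, hq₀, hq₁]
    push_cast
    linear_combination this
  | succ k ih =>
    have hk := hx.succ_mul_sub (k + 1)
    rw [hab (k + 1) le_rfl] at hk
    rw [hp k, hq k]
    push_cast
    linear_combination x (k + 2) * ih (fun i hi => hab i (by omega)) +
      ((p (k + 1) : ℝ) - α * q (k + 1)) * hk

end IsConvergentsOf

lemma abs_sub_eq_of_mobius {α β X Y P₀ P₁ Q₀ Q₁ : ℝ} (hdet : |P₁ * Q₀ - P₀ * Q₁| = 1)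
    (hα : α * (X * Q₁ + Q₀) = X * P₁ + P₀) (hβ : β * (Y * Q₁ + Q₀) = Y * P₁ + P₀)
    (hX : 0 < X * Q₁ + Q₀) (hY : 0 < Y * Q₁ + Q₀) :
    |α - β| = |X - Y| / ((X * Q₁ + Q₀) * (Y * Q₁ + Q₀)) := by
  have h : (α - β) * ((X * Q₁ + Q₀) * (Y * Q₁ + Q₀)) = (X - Y) * (P₁ * Q₀ - P₀ * Q₁) := by
    linear_combination (Y * Q₁ + Q₀) * hα - (X * Q₁ + Q₀) * hβ
  rw [eq_div_iff (mul_pos hX hY).ne', ← abs_of_pos (mul_pos hX hY), ← abs_mul, h, abs_mul,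
    hdet, mul_one]

section MobiusDenominator

variable {X Y B Q₀ Q₁ C : ℝ}

lemma mobius_denom_le_two_mul (hQ₀ : 0 ≤ Q₀) (hQ₁ : 0 ≤ Q₁) (hB : 1 ≤ B) (hY : Y ≤ B + 1) :
    Y * Q₁ + Q₀ ≤ 2 * (B * Q₁ + Q₀) := by
  nlinarith

lemma mobius_denom_mul_le_of_lt (hQ₀ : 0 ≤ Q₀) (hQ₁ : 0 ≤ Q₁) (hB : 1 ≤ B) (hXB : X ≤ B)
    (hY : Y ≤ B + 1) (hC : 0 ≤ C) (hsep : 1 ≤ (Y - B) * C) :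
    (X * Q₁ + Q₀) * (Y * Q₁ + Q₀) ≤ (Y - X) * (2 * (B * Q₁ + Q₀) ^ 2 * C) := by
  have hBY : B < Y := by nlinarith
  have hDx : X * Q₁ + Q₀ ≤ B * Q₁ + Q₀ := by gcongr
  have hDy := mobius_denom_le_two_mul hQ₀ hQ₁ hB hY
  have hsep' : 1 ≤ (Y - X) * C := hsep.trans (by gcongr)
  calc (X * Q₁ + Q₀) * (Y * Q₁ + Q₀) ≤ (B * Q₁ + Q₀) * (2 * (B * Q₁ + Q₀)) :=
        mul_le_mul hDx hDy (by nlinarith) (by positivity)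
    _ = 2 * (B * Q₁ + Q₀) ^ 2 * 1 := by ring
    _ ≤ 2 * (B * Q₁ + Q₀) ^ 2 * ((Y - X) * C) := by gcongr
    _ = _ := by ring

lemma mobius_denom_mul_le_of_gt (hQ₀ : 0 ≤ Q₀) (hQ₁ : 0 ≤ Q₁) (hB : 1 ≤ B) (hY : 0 ≤ Y)
    (hBX : B + 1 ≤ X) (hC : 0 ≤ C) (hsep : 1 ≤ (B + 1 - Y) * C) :
    (X * Q₁ + Q₀) * (Y * Q₁ + Q₀) ≤ (X - Y) * (4 * (B * Q₁ + Q₀) ^ 2 * C) := by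
  have hYB : Y < B + 1 := by nlinarith
  have hDy := mobius_denom_le_two_mul hQ₀ hQ₁ hB hYB.le
  -- `t ↦ (t Q₁ + Q₀) / (t - Y)` is decreasing on `t > Y`
  have hanti : (X * Q₁ + Q₀) * (B + 1 - Y) ≤ ((B + 1) * Q₁ + Q₀) * (X - Y) := by
    nlinarith [mul_nonneg (sub_nonneg.2 hBX) (add_nonneg (mul_nonneg hY hQ₁) hQ₀)]
  have hDx : X * Q₁ + Q₀ ≤ (X - Y) * (2 * (B * Q₁ + Q₀) * C) :=
    calc X * Q₁ + Q₀ ≤ (X * Q₁ + Q₀) * ((B + 1 - Y) * C) :=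
          le_mul_of_one_le_right (by nlinarith) hsep
      _ = (X * Q₁ + Q₀) * (B + 1 - Y) * C := by ring
      _ ≤ ((B + 1) * Q₁ + Q₀) * (X - Y) * C := by gcongr
      _ ≤ 2 * (B * Q₁ + Q₀) * (X - Y) * C := by
          gcongr
          · linarith
          · exact mobius_denom_le_two_mul hQ₀ hQ₁ hB le_rfl
      _ = _ := by ring
  calc (X * Q₁ + Q₀) * (Y * Q₁ + Q₀) ≤ (X - Y) * (2 * (B * Q₁ + Q₀) * C) * (2 * (B * Q₁ + Q₀)) :=
        mul_le_mul hDx hDy (add_nonneg (mul_nonneg hY hQ₁) hQ₀) (by nlinarith)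
    _ = _ := by ring

end MobiusDenominator

lemma mobius_denom_mul_le_of_ne {X Y Q₀ Q₁ C : ℝ} {A B : ℤ} (hQ₀ : 0 ≤ Q₀) (hQ₁ : 0 ≤ Q₁)
    (hB : 1 ≤ B) (hAX : (A : ℝ) < X) (hXA : X < A + 1) (hYB : Y < B + 1) (hAB : A ≠ B)
    (hC : 0 ≤ C) (hsep₁ : 1 ≤ (Y - B) * C) (hsep₂ : 1 ≤ (B + 1 - Y) * C) :
    (X * Q₁ + Q₀) * (Y * Q₁ + Q₀) ≤ |X - Y| * (4 * (B * Q₁ + Q₀) ^ 2 * C) := by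
  have hB' : (1 : ℝ) ≤ B := by exact_mod_cast hB
  have hBY : (B : ℝ) < Y := by nlinarith
  rcases hAB.lt_or_gt with hlt | hgt
  · have hAB' : (A : ℝ) + 1 ≤ B := by exact_mod_cast hlt
    rw [abs_sub_comm, abs_of_pos (by linarith)]
    calc _ ≤ (Y - X) * (2 * (B * Q₁ + Q₀) ^ 2 * C) :=
          mobius_denom_mul_le_of_lt hQ₀ hQ₁ hB' (by linarith) hYB.le hC hsep₁
      _ ≤ _ := mul_le_mul_of_nonneg_left (by gcongr; norm_num) (by linarith)
  · have hBA : (B : ℝ) + 1 ≤ A := by exact_mod_cast hgt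
    rw [abs_of_pos (by linarith)]
    exact mobius_denom_mul_le_of_gt hQ₀ hQ₁ hB' (by linarith) (by linarith) hC hsep₂

theorem one_div_le_abs_sub_of_partialQuotients_ne {α β : ℝ} {a b p q : ℕ → ℤ} {x y : ℕ → ℝ}
    (hx : IsCompleteQuotients α a x) (hy : IsCompleteQuotients β b y) (h : IsConvergentsOf b p q)
    {m : ℕ} (hab : ∀ i ≤ m, a i = b i) (hne : a (m + 1) ≠ b (m + 1)) :
    1 / (4 * (q (m + 2) : ℝ) ^ 2 * (((b (m + 2) : ℝ) + 1) * ((b (m + 3) : ℝ) + 1))) ≤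
      |α - β| := by
  have hb := hy.one_le_succ
  have hB₁ : (1 : ℝ) ≤ b (m + 2) := by exact_mod_cast hb (m + 1)
  have hB₂ : (1 : ℝ) ≤ b (m + 3) := by exact_mod_cast hb (m + 2)
  set X := x (m + 1)
  set Y := y (m + 1)
  set B : ℝ := (b (m + 1) : ℝ) with hBdef
  set C : ℝ := ((b (m + 2) : ℝ) + 1) * ((b (m + 3) : ℝ) + 1)
  have hQ : (q (m + 2) : ℝ) = B * q (m + 1) + q m := by
    rw [h.2.2.2.2.2 m]; push_cast; rfl
  have hQ₀ : (0 : ℝ) ≤ q m := by exact_mod_cast (h.q_nonneg_and_le_succ hb m).1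
  have hQ₁ : (1 : ℝ) ≤ q (m + 1) := by exact_mod_cast h.one_le_q_succ hb m
  have hB : 1 ≤ B := by rw [hBdef]; exact_mod_cast hb m
  have hC : 0 < C := mul_pos (by linarith) (by linarith)
  have hX : 1 < X := hx.one_lt_succ m
  have hY : 1 < Y := hy.one_lt_succ m
  have hDx : 0 < X * q (m + 1) + q m := by nlinarith
  have hDy : 0 < Y * q (m + 1) + q m := by nlinarith
  have hdet : |(p (m + 1) : ℝ) * q m - p m * q (m + 1)| = 1 := by
    exact_mod_cast (congrArg abs (h.det m)).trans (by simp)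
  rw [abs_sub_eq_of_mobius hdet (h.mul_denom_eq hx hab) (h.mul_denom_eq hy fun _ _ => rfl)
    hDx hDy, div_le_div_iff₀ (by rw [hQ]; positivity) (mul_pos hDx hDy), hQ, one_mul]
  have hsep₁ : 1 ≤ (Y - B) * C :=
    calc (1 : ℝ) ≤ (Y - B) * ((b (m + 2) : ℝ) + 1) := (hy.one_lt_sub_mul (m + 1)).le
      _ ≤ (Y - B) * C := by
        gcongr
        · linarith [hy.floor_lt (m + 1)]
        · exact le_mul_of_one_le_right (by linarith) (by linarith)
  have := mobius_denom_mul_le_of_ne (Q₁ := q (m + 1)) hQ₀ (by linarith) (hb m)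
    (hx.floor_lt (m + 1)) (hx.lt_floor_add_one (m + 1)) (hy.lt_floor_add_one (m + 1)) hne hC.le
    hsep₁ (hy.one_lt_add_one_sub_mul (m + 1)).le
  linarith

/-- if the continued fraction expansions of irrational
`α, β ∈ (0,1)` agree in positions `1,…,n−1` and differ at position `n`, then
`|α − β| ≥ 1/(72 qₙ² b_{n+1} b_{n+2}) ≥ 1/(72 qₙ q_{n+2})`, where `qₖ` are the
convergent denominators of `β` (shifted indexing: `qₙ = q (n+1)`). -/
theorem stmt4 (α β : ℝ) (hα : α ∈ Set.Ioo (0 : ℝ) 1) (hβ : β ∈ Set.Ioo (0 : ℝ) 1)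
    (hirrα : Irrational α) (hirrβ : Irrational β)
    (a b : ℕ → ℤ) (hcfa : IsCFOf α a) (hcfb : IsCFOf β b)
    (p q : ℕ → ℤ) (h : IsConvergentsOf b p q)
    (n : ℕ) (hn : 1 ≤ n) (hagree : ∀ i, 1 ≤ i → i ≤ n - 1 → a i = b i)
    (hne : a n ≠ b n) :
    1 / (72 * (q (n + 1) : ℝ) ^ 2 * (b (n + 1) : ℝ) * (b (n + 2) : ℝ)) ≤ |α - β| ∧
    1 / (72 * (q (n + 1) : ℝ) * (q (n + 3) : ℝ)) ≤
      1 / (72 * (q (n + 1) : ℝ) ^ 2 * (b (n + 1) : ℝ) * (b (n + 2) : ℝ)) := by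
  obtain ⟨m, rfl⟩ : ∃ m, n = m + 1 := ⟨n - 1, by omega⟩
  obtain ⟨x, hx⟩ := hcfa.exists_isCompleteQuotients hirrα
  obtain ⟨y, hy⟩ := hcfb.exists_isCompleteQuotients hirrβ
  have hab : ∀ i ≤ m, a i = b i := by
    rintro (_ | i) hi
    · rw [hx.eq_zero_of_mem_Ioo hα, hy.eq_zero_of_mem_Ioo hβ]
    · exact hagree (i + 1) (by omega) (by omega)
  have hb := hy.one_le_succ
  have hQ : (1 : ℝ) ≤ q (m + 2) := by exact_mod_cast h.one_le_q_succ hb (m + 1)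
  have hB₁ : (1 : ℝ) ≤ b (m + 2) := by exact_mod_cast hb (m + 1)
  have hB₂ : (1 : ℝ) ≤ b (m + 3) := by exact_mod_cast hb (m + 2)
  have hq : (q (m + 2) : ℝ) * b (m + 2) * b (m + 3) ≤ q (m + 4) := by
    exact_mod_cast h.q_mul_mul_le hb (m + 1)
  refine ⟨le_trans ?_ (one_div_le_abs_sub_of_partialQuotients_ne hx hy h hab hne), ?_⟩
  · apply one_div_le_one_div_of_le (by positivity)
    nlinarith [mul_nonneg (sub_nonneg.2 hB₁) (sub_nonneg.2 hB₂), sq_nonneg (q (m + 2) : ℝ)]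
  · apply one_div_le_one_div_of_le (by positivity)
    nlinarith
end

section
/- Let α be an irrational real number with continued fraction expansion [a₀; a₁, a₂, …] and convergents pₙ/qₙ, and let α′ be an irrational number with convergents p′ₙ/q′ₙ. Suppose for some k, l, m the word a_{k+1}⋯a_{k+m} equals the mirror image a′_{l+m}a′_{l+m−1}⋯a′_{l+1} of the corresponding word of α′. Then [[p_k, p_{k−1}],[q_k, q_{k−1}]]·[[p′_{l+m}, q′_{l+m}],[p′_{l+m−1}, q′_{l+m−1}]] = [[p_{k+m}, p_{k+m−1}],[q_{k+m}, q_{k+m−1}]]·[[p′_l, q′_l],[p′_{l−1}, q′_{l−1}]]. -/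
/-- if the word `a_{k+1}⋯a_{k+m}` is the mirror image of
`a′_{l+1}⋯a′_{l+m}`, i.e. `a_{k+i} = a′_{l+m+1−i}`, then
`[[p_k, p_{k−1}],[q_k, q_{k−1}]]·[[p′_{l+m}, q′_{l+m}],[p′_{l+m−1}, q′_{l+m−1}]]
 = [[p_{k+m}, p_{k+m−1}],[q_{k+m}, q_{k+m−1}]]·[[p′_l, q′_l],[p′_{l−1}, q′_{l−1}]]`
(shifted indexing: `pₙ = p (n+1)`). -/
theorem stmt8 (α α' : ℝ) (hα : Irrational α) (hα' : Irrational α')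
    (a a' : ℕ → ℤ) (hcf : IsCFOf α a) (hcf' : IsCFOf α' a')
    (p q p' q' : ℕ → ℤ) (h : IsConvergentsOf a p q) (h' : IsConvergentsOf a' p' q')
    (k l m : ℕ) (hagree : ∀ i, 1 ≤ i → i ≤ m → a (k + i) = a' (l + m + 1 - i)) :
    !![p (k + 1), p k; q (k + 1), q k] *
      !![p' (l + m + 1), q' (l + m + 1); p' (l + m), q' (l + m)] =
    !![p (k + m + 1), p (k + m); q (k + m + 1), q (k + m)] *
      !![p' (l + 1), q' (l + 1); p' l, q' l] := by
  obtain ⟨hp0, hp1, hp, hq0, hq1, hq⟩ := h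
  obtain ⟨hp0', hp1', hp', hq0', hq1', hq'⟩ := h'
  induction m generalizing l with
  | zero => rfl
  | succ m ih =>
    have hag : ∀ i, 1 ≤ i → i ≤ m → a (k + i) = a' (l + 1 + m + 1 - i) := by
      intro i h1 h2
      have := hagree i h1 (by omega)
      rw [this]; congr 1; omega
    have IH := ih (l + 1) hag
    have key : a (k + m + 1) = a' (l + 1) := by
      have := hagree (m + 1) (by omega) (by omega)
      rw [show k + (m + 1) = k + m + 1 from rfl] at this
      rw [this]; congr 1; omega
    have stepM : !![p (k + m + 1 + 1), p (k + m + 1); q (k + m + 1 + 1), q (k + m + 1)]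
        = !![p (k + m + 1), p (k + m); q (k + m + 1), q (k + m)] * !![a' (l + 1), 1; 1, 0] := by
      rw [← key]
      have e1 : p (k + m + 1 + 1) = a (k + m + 1) * p (k + m + 1) + p (k + m) := hp (k + m)
      have e2 : q (k + m + 1 + 1) = a (k + m + 1) * q (k + m + 1) + q (k + m) := hq (k + m)
      rw [e1, e2]
      ext i j; fin_cases i <;> fin_cases j <;> simp [Matrix.mul_apply] <;> ring
    have stepN : !![p' (l + 1 + 1), q' (l + 1 + 1); p' (l + 1), q' (l + 1)]
        = !![a' (l + 1), 1; 1, 0] * !![p' (l + 1), q' (l + 1); p' l, q' l] := by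
      have e1 : p' (l + 1 + 1) = a' (l + 1) * p' (l + 1) + p' l := hp' l
      have e2 : q' (l + 1 + 1) = a' (l + 1) * q' (l + 1) + q' l := hq' l
      rw [e1, e2]
      ext i j; fin_cases i <;> fin_cases j <;> simp [Matrix.mul_apply] <;> ring
    have e1 : l + (m + 1) + 1 = l + 1 + m + 1 := by omega
    have e2 : l + (m + 1) = l + 1 + m := by omega
    have e3 : k + (m + 1) + 1 = k + m + 1 + 1 := by omega
    have e4 : k + (m + 1) = k + m + 1 := by omega
    rw [e1, e2, e3, e4, IH, stepM, Matrix.mul_assoc, ← stepN]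
end

section
/- Let α, α′ be irrational real numbers with convergents pₙ/qₙ, p′ₙ/q′ₙ. For indices k, l, m set a_n = q_{k}q′_{l−1} − q_{k−1}q′_{l}, b_n = q_{k}p′_{l−1} − q_{k−1}p′_{l}, c_n = p_{k}q′_{l−1} − p_{k−1}q′_{l}, d_n = p_{k}p′_{l−1} − p_{k−1}p′_{l}. If the partial quotients of α in positions k+1,…,k+m agree with those of α′ in positions l+1,…,l+m, then |αα′·a_n − α·b_n − α′·c_n + d_n| < 2/(q_{k+m}·q′_{l+m}). -/
/-!
With `Eₙ = αqₙ − pₙ` and `E'ₙ = α'q'ₙ − p'ₙ`, the linear form is the cross determinant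
`E_k E'_{l−1} − E_{k−1} E'_l`. Both error sequences obey the recurrence of the convergents,
`E_{n+1} = a_{n+1} Eₙ + E_{n−1}`, so advancing both indices past a common partial quotient only
flips the sign of the determinant; after `m` steps it is
`±(E_{k+m} E'_{l+m−1} − E_{k+m−1} E'_{l+m})`.
Each of these four errors is below `1/q_{k+m}` or `1/q'_{l+m}`, since `|Eₙ| < 1/q_{n+1} ≤ 1/qₙ`.
-/

def crossDet (u v : ℕ → ℝ) (i j : ℕ) : ℝ := u (i + 1) * v j - u i * v (j + 1)

section Cross

variable {c c' u v : ℕ → ℝ}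

theorem crossDet_succ_succ (hu : ∀ n, u (n + 2) = c (n + 1) * u (n + 1) + u n)
    (hv : ∀ n, v (n + 2) = c' (n + 1) * v (n + 1) + v n) {i j : ℕ}
    (hc : c (i + 1) = c' (j + 1)) :
    crossDet u v (i + 1) (j + 1) = -crossDet u v i j := by
  simp only [crossDet, hu i, hv j, hc]
  ring

theorem crossDet_add_add (hu : ∀ n, u (n + 2) = c (n + 1) * u (n + 1) + u n)
    (hv : ∀ n, v (n + 2) = c' (n + 1) * v (n + 1) + v n) {i j m : ℕ}
    (hc : ∀ t, 1 ≤ t → t ≤ m → c (i + t) = c' (j + t)) :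
    crossDet u v (i + m) (j + m) = (-1) ^ m * crossDet u v i j := by
  induction m with
  | zero => simp
  | succ m ih =>
    have hc' : c (i + m + 1) = c' (j + m + 1) := hc (m + 1) (by omega) le_rfl
    rw [← add_assoc, ← add_assoc, crossDet_succ_succ hu hv hc',
      ih fun t ht₁ ht₂ => hc t ht₁ (by omega), pow_succ]
    ring

theorem abs_crossDet_lt {i j : ℕ} {Q Q' : ℝ} (hu₀ : |u i| < 1 / Q) (hu₁ : |u (i + 1)| < 1 / Q)
    (hv₀ : |v j| < 1 / Q') (hv₁ : |v (j + 1)| < 1 / Q') :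
    |crossDet u v i j| < 2 / (Q * Q') :=
  calc |crossDet u v i j| ≤ |u (i + 1)| * |v j| + |u i| * |v (j + 1)| := by
        rw [← abs_mul, ← abs_mul]; exact abs_sub _ _
    _ < 1 / Q * (1 / Q') + 1 / Q * (1 / Q') := by gcongr
    _ = 2 / (Q * Q') := by ring

end Cross

/-- `cfError α p q (n + 1)` is the error `α qₙ - pₙ` of the `n`-th convergent. -/
def cfError (α : ℝ) (p q : ℕ → ℤ) (n : ℕ) : ℝ := α * q n - p n

namespace IsConvergentsOf

variable {a p q : ℕ → ℤ}

theorem den_rec (h : IsConvergentsOf a p q) (n : ℕ) :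
    (q (n + 2) : ℝ) = a (n + 1) * q (n + 1) + q n := by
  rw [h.2.2.2.2.2 n]; push_cast; ring

theorem cfError_rec (h : IsConvergentsOf a p q) (α : ℝ) (n : ℕ) :
    cfError α p q (n + 2) = a (n + 1) * cfError α p q (n + 1) + cfError α p q n := by
  simp only [cfError, h.2.2.1 n, h.2.2.2.2.2 n]; push_cast; ring

theorem crossDet_cfError_den (h : IsConvergentsOf a p q) (α : ℝ) (n : ℕ) :
    crossDet (cfError α p q) (fun n => (q n : ℝ)) n n = (-1) ^ n := by
  have hshift := crossDet_add_add (c := fun n => (a n : ℝ)) (c' := fun n => (a n : ℝ))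
    (v := fun n => (q n : ℝ)) (h.cfError_rec α) h.den_rec (i := 0) (j := 0) (m := n)
    fun _ _ _ => rfl
  obtain ⟨hp₀, hp₁, -, hq₀, hq₁, -⟩ := h
  rw [zero_add] at hshift
  rw [hshift]
  simp [crossDet, cfError, hp₀, hp₁, hq₀, hq₁]

theorem one_le_den (h : IsConvergentsOf a p q) (ha : ∀ n, 1 ≤ a (n + 1)) (n : ℕ) :
    1 ≤ q (n + 1) := by
  induction n using Nat.twoStepInduction with
  | zero => exact h.2.2.2.2.1.ge
  | one => rw [h.2.2.2.2.2 0, h.2.2.2.2.1, h.2.2.2.1]; simpa using ha 0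
  | more n ih₀ ih₁ => rw [h.2.2.2.2.2]; nlinarith [ha (n + 1)]

theorem den_nonneg (h : IsConvergentsOf a p q) (ha : ∀ n, 1 ≤ a (n + 1)) (n : ℕ) :
    0 ≤ q n := by
  cases n with
  | zero => exact h.2.2.2.1.ge
  | succ n => exact zero_le_one.trans (h.one_le_den ha n)

theorem den_le_den_succ (h : IsConvergentsOf a p q) (ha : ∀ n, 1 ≤ a (n + 1)) (n : ℕ) :
    q (n + 1) ≤ q (n + 2) := by
  rw [h.2.2.2.2.2]
  nlinarith [ha n, h.one_le_den ha n, h.den_nonneg ha n]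

end IsConvergentsOf

theorem Irrational.intCast_floor_lt {r : ℝ} (h : Irrational r) : (⌊r⌋ : ℝ) < r :=
  (Int.floor_le r).lt_of_ne (h.ne_int _).symm

section CompleteQuotients

variable {α : ℝ} {a p q : ℕ → ℤ} {x : ℕ → ℝ}

theorem irrational_completeQuotient (hα : Irrational α) (hx₀ : x 0 = α)
    (hx : ∀ n, x (n + 1) = 1 / (x n - ⌊x n⌋)) (n : ℕ) : Irrational (x n) := by
  induction n with
  | zero => rwa [hx₀]
  | succ n ih => rw [hx, one_div]; exact (ih.sub_intCast _).inv

theorem one_lt_completeQuotient_succ {n : ℕ} (hirr : Irrational (x n))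
    (hx : x (n + 1) = 1 / (x n - ⌊x n⌋)) : 1 < x (n + 1) := by
  rw [hx]
  exact one_lt_one_div (sub_pos.mpr hirr.intCast_floor_lt)
    (by linarith [Int.lt_floor_add_one (x n)])

theorem cfError_eq_neg_mul (hα : Irrational α) (hx₀ : x 0 = α) (ha : ∀ n, a n = ⌊x n⌋)
    (hx : ∀ n, x (n + 1) = 1 / (x n - ⌊x n⌋)) (h : IsConvergentsOf a p q) (n : ℕ) :
    cfError α p q n = -(x (n + 1) * cfError α p q (n + 1)) := by
  have hfract (n : ℕ) : x n - ⌊x n⌋ ≠ 0 :=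
    sub_ne_zero.mpr (irrational_completeQuotient hα hx₀ hx n).intCast_floor_lt.ne'
  induction n with
  | zero =>
    obtain ⟨hp₀, hp₁, -, hq₀, hq₁, -⟩ := h
    have := hfract 0
    simp only [cfError, hx, ← hx₀, hp₀, hp₁, hq₀, hq₁, ha]
    field_simp
    ring
  | succ n ih =>
    -- `E_{n+2} = a_{n+1} E_{n+1} + E_n = -(x_{n+1} - a_{n+1}) E_{n+1}`
    have := hfract (n + 1)
    rw [h.cfError_rec, ih, hx (n + 1), ha]
    field_simp
    ring

end CompleteQuotients

namespace IsCFOf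

variable {α : ℝ} {a p q : ℕ → ℤ}

theorem one_le_apply_succ (hα : Irrational α) (hcf : IsCFOf α a) (n : ℕ) : 1 ≤ a (n + 1) := by
  obtain ⟨x, hx₀, ha, hx⟩ := hcf
  rw [ha, Int.le_floor]
  exact_mod_cast (one_lt_completeQuotient_succ (irrational_completeQuotient hα hx₀ hx n) (hx n)).le

theorem abs_cfError_lt (hα : Irrational α) (hcf : IsCFOf α a) (h : IsConvergentsOf a p q)
    (n : ℕ) : |cfError α p q (n + 1)| < 1 / q (n + 2) := by
  have ha₁ := hcf.one_le_apply_succ hα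
  obtain ⟨x, hx₀, ha, hx⟩ := hcf
  have hirr := irrational_completeQuotient hα hx₀ hx (n + 1)
  have hq : (0 : ℝ) ≤ q n := by exact_mod_cast h.den_nonneg ha₁ n
  have hq₁ : (1 : ℝ) ≤ q (n + 1) := by exact_mod_cast h.one_le_den ha₁ n
  have hq₂ : (1 : ℝ) ≤ q (n + 2) := by exact_mod_cast h.one_le_den ha₁ (n + 1)
  have hden : (q (n + 2) : ℝ) < x (n + 1) * q (n + 1) + q n := by
    rw [h.den_rec, ha]
    nlinarith [hirr.intCast_floor_lt]
  -- `E_n = -x_{n+1} E_{n+1}` turns `crossDet E q n n = ±1` into this product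
  have hprod : |cfError α p q (n + 1)| * (x (n + 1) * q (n + 1) + q n) = 1 := by
    have hx₁ := one_lt_completeQuotient_succ (irrational_completeQuotient hα hx₀ hx n) (hx n)
    have hpos : 0 < x (n + 1) * q (n + 1) + q n := by positivity
    calc _ = |crossDet (cfError α p q) (fun n => (q n : ℝ)) n n| := by
          rw [crossDet, cfError_eq_neg_mul hα hx₀ ha hx h n, ← abs_of_pos hpos, ← abs_mul]
          congr 1; ring
      _ = 1 := by rw [h.crossDet_cfError_den, abs_neg_one_pow]
  have hE : 0 < |cfError α p q (n + 1)| := by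
    refine abs_pos.mpr fun h0 => ?_
    simp [h0] at hprod
  rw [lt_div_iff₀ (by linarith)]
  calc _ < |cfError α p q (n + 1)| * (x (n + 1) * q (n + 1) + q n) := by gcongr
    _ = 1 := hprod

theorem abs_cfError_lt_of_one_le (hα : Irrational α) (hcf : IsCFOf α a)
    (h : IsConvergentsOf a p q) {n : ℕ} (hn : 1 ≤ n) : |cfError α p q n| < 1 / q (n + 1) := by
  obtain ⟨n, rfl⟩ := Nat.exists_eq_add_of_le' hn
  exact hcf.abs_cfError_lt hα h n

theorem abs_cfError_succ_lt (hα : Irrational α) (hcf : IsCFOf α a) (h : IsConvergentsOf a p q)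
    (n : ℕ) : |cfError α p q (n + 1)| < 1 / q (n + 1) := by
  have ha₁ := hcf.one_le_apply_succ hα
  refine (hcf.abs_cfError_lt hα h n).trans_le (one_div_le_one_div_of_le ?_ ?_)
  · exact_mod_cast zero_lt_one.trans_le (h.one_le_den ha₁ n)
  · exact_mod_cast h.den_le_den_succ ha₁ n

end IsCFOf

/-- with `aₙ = q_k q′_{l−1} − q_{k−1} q′_l` etc. (shifted indexing:
`q_k = q (k+1)`), if the partial quotients of `α` in positions `k+1,…,k+m`
agree with those of `α'` in positions `l+1,…,l+m`, then
`|αα′aₙ − αbₙ − α′cₙ + dₙ| < 2/(q_{k+m} q′_{l+m})`. -/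
theorem stmt9 (α α' : ℝ) (hα : Irrational α) (hα' : Irrational α')
    (a a' : ℕ → ℤ) (hcf : IsCFOf α a) (hcf' : IsCFOf α' a')
    (p q p' q' : ℕ → ℤ) (h : IsConvergentsOf a p q) (h' : IsConvergentsOf a' p' q')
    (k l m : ℕ) (hm : 1 ≤ m)
    (hagree : ∀ i, 1 ≤ i → i ≤ m → a (k + i) = a' (l + i)) :
    |α * α' * ((q (k + 1) : ℝ) * (q' l : ℝ) - (q k : ℝ) * (q' (l + 1) : ℝ))
      - α * ((q (k + 1) : ℝ) * (p' l : ℝ) - (q k : ℝ) * (p' (l + 1) : ℝ))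
      - α' * ((p (k + 1) : ℝ) * (q' l : ℝ) - (p k : ℝ) * (q' (l + 1) : ℝ))
      + ((p (k + 1) : ℝ) * (p' l : ℝ) - (p k : ℝ) * (p' (l + 1) : ℝ))|
      < 2 / ((q (k + m + 1) : ℝ) * (q' (l + m + 1) : ℝ)) := by
  have hshift := crossDet_add_add (c := fun n => (a n : ℝ)) (c' := fun n => (a' n : ℝ))
    (h.cfError_rec α) (h'.cfError_rec α') (i := k) (j := l)
    fun t ht₁ ht₂ => by exact_mod_cast hagree t ht₁ ht₂
  have hbound : |crossDet (cfError α p q) (cfError α' p' q') (k + m) (l + m)|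
      < 2 / ((q (k + m + 1) : ℝ) * (q' (l + m + 1) : ℝ)) :=
    abs_crossDet_lt (hcf.abs_cfError_lt_of_one_le hα h (by omega)) (hcf.abs_cfError_succ_lt hα h _)
      (hcf'.abs_cfError_lt_of_one_le hα' h' (by omega)) (hcf'.abs_cfError_succ_lt hα' h' _)
  rw [hshift, abs_mul, abs_neg_one_pow, one_mul] at hbound
  refine lt_of_eq_of_lt ?_ hbound
  congr 1
  simp only [crossDet, cfError]
  ring
end

section
/- Let α be an irrational real number with convergents pₙ/qₙ, and suppose the partial quotients of α in positions k+1, …, k+m coincide with those of an irrational α′ (convergents p′ₙ/q′ₙ) in positions l+1, …, l+m, for all members of an infinite family of triples (k,l,m) with the last-letter normalization that a_k ≠ a′_l whenever min(k,l) ≥ 3. Define the matrix [[c,−d],[a,−b]] = [[p_k, p_{k−1}],[q_k, q_{k−1}]]·[[q′_{l−1}, −p′_{l−1}],[−q′_l, p′_l]]. Then this matrix has determinant ±1, and if the family contains triples with both k and l strictly increasing, then max(|a|,|b|,|c|,|d|) tends to infinity along the family. -/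
/-- The matrix `[[c,−d],[a,−b]] = [[p_k, p_{k−1}],[q_k, q_{k−1}]] ·
[[q′_{l−1}, −p′_{l−1}],[−q′_l, p′_l]]` (shifted indexing: `p_k = p (k+1)`). -/
def Dmat (p q p' q' : ℕ → ℤ) (k l : ℕ) : Matrix (Fin 2) (Fin 2) ℤ :=
  !![p (k + 1), p k; q (k + 1), q k] * !![q' l, -p' l; -q' (l + 1), p' (l + 1)]

open Filter Matrix

def cfMatrix (b : ℤ) : Matrix (Fin 2) (Fin 2) ℤ := !![b, 1; 1, 0]

def wordMatrix (s : List ℤ) : Matrix (Fin 2) (Fin 2) ℤ := (s.map cfMatrix).prod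

section wordMatrix

variable {b b' : ℤ} {s t t' : List ℤ}

@[simp]
lemma wordMatrix_nil : wordMatrix [] = 1 := rfl

lemma wordMatrix_cons : wordMatrix (b :: s) = cfMatrix b * wordMatrix s := by
  simp [wordMatrix]

@[simp]
lemma wordMatrix_append : wordMatrix (s ++ t) = wordMatrix s * wordMatrix t := by
  simp [wordMatrix]

@[simp]
lemma wordMatrix_cons_zero_zero :
    wordMatrix (b :: s) 0 0 = b * wordMatrix s 0 0 + wordMatrix s 1 0 := by
  simp [wordMatrix_cons, cfMatrix, mul_apply]

@[simp]
lemma wordMatrix_cons_zero_one :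
    wordMatrix (b :: s) 0 1 = b * wordMatrix s 0 1 + wordMatrix s 1 1 := by
  simp [wordMatrix_cons, cfMatrix, mul_apply]

@[simp]
lemma wordMatrix_cons_one_zero : wordMatrix (b :: s) 1 0 = wordMatrix s 0 0 := by
  simp [wordMatrix_cons, cfMatrix, mul_apply]

@[simp]
lemma wordMatrix_cons_one_one : wordMatrix (b :: s) 1 1 = wordMatrix s 0 1 := by
  simp [wordMatrix_cons, cfMatrix, mul_apply]

lemma det_wordMatrix (s : List ℤ) : (wordMatrix s).det = (-1) ^ s.length := by
  induction s with
  | nil => simp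
  | cons b s ih =>
    rw [wordMatrix_cons, det_mul, ih, cfMatrix, det_fin_two_of, List.length_cons, pow_succ]
    ring

lemma wordMatrix_bounds (hs : ∀ b ∈ s, 0 < b) :
    1 ≤ wordMatrix s 0 0 ∧ 0 ≤ wordMatrix s 1 0 ∧ wordMatrix s 1 0 ≤ wordMatrix s 0 0 ∧
      0 ≤ wordMatrix s 0 1 ∧ 0 ≤ wordMatrix s 1 1 ∧ 1 ≤ wordMatrix s 0 1 + wordMatrix s 1 1 := by
  induction s with
  | nil => simp [one_apply]
  | cons b s ih =>
    have hb : 0 < b := hs b List.mem_cons_self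
    obtain ⟨h₁, h₂, h₃, h₄, h₅, h₆⟩ := ih fun c hc ↦ hs c (List.mem_cons_of_mem b hc)
    simp only [wordMatrix_cons_zero_zero, wordMatrix_cons_zero_one, wordMatrix_cons_one_zero,
      wordMatrix_cons_one_one]
    refine ⟨?_, ?_, ?_, ?_, ?_, ?_⟩ <;> nlinarith

lemma one_le_wordMatrix_one_zero (hs : ∀ b ∈ s, 0 < b) (hne : s ≠ []) :
    1 ≤ wordMatrix s 1 0 := by
  obtain ⟨b, s, rfl⟩ := List.exists_cons_of_ne_nil hne
  simpa using (wordMatrix_bounds fun c hc ↦ hs c (List.mem_cons_of_mem b hc)).1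

lemma wordMatrix_zero_one_eq_zero_iff (hs : ∀ b ∈ s, 0 < b) :
    wordMatrix s 0 1 = 0 ↔ s = [] := by
  refine ⟨fun h ↦ ?_, by rintro rfl; simp [one_apply]⟩
  by_contra hne
  obtain ⟨b, s, rfl⟩ := List.exists_cons_of_ne_nil hne
  have hb : 0 < b := hs b List.mem_cons_self
  obtain ⟨-, -, -, h₄, h₅, h₆⟩ := wordMatrix_bounds fun c hc ↦ hs c (List.mem_cons_of_mem b hc)
  rw [wordMatrix_cons_zero_one] at h
  nlinarith

/-- Peeling off the first letter: the second row of `wordMatrix (b :: t)` is the first row of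
`wordMatrix t`, and the first row then determines `b` because `0 < t₁₀ ≤ t₀₀` for `t ≠ []`. -/
lemma eq_and_wordMatrix_eq_of_wordMatrix_cons_eq (ht : ∀ c ∈ t, 0 < c)
    (ht' : ∀ c ∈ t', 0 < c) (h : wordMatrix (b :: t) = wordMatrix (b' :: t')) :
    b = b' ∧ wordMatrix t = wordMatrix t' := by
  have e : ∀ i j, wordMatrix (b :: t) i j = wordMatrix (b' :: t') i j := fun i j ↦ by rw [h]
  have e₀₀ := e 0 0
  have e₀₁ := e 0 1
  have e₁₀ := e 1 0
  have e₁₁ := e 1 1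
  simp only [wordMatrix_cons_zero_zero, wordMatrix_cons_zero_one, wordMatrix_cons_one_zero,
    wordMatrix_cons_one_one] at e₀₀ e₀₁ e₁₀ e₁₁
  rw [← e₁₀] at e₀₀
  have hempty : t = [] ↔ t' = [] := by
    rw [← wordMatrix_zero_one_eq_zero_iff ht, ← wordMatrix_zero_one_eq_zero_iff ht', e₁₁]
  have hbb : b = b' := by
    by_cases hnil : t = []
    · subst hnil
      obtain rfl := hempty.mp rfl
      simpa using e₀₀
    have hnil' : t' ≠ [] := fun h' ↦ hnil (hempty.mpr h')
    obtain ⟨hpos, -, hle, -⟩ := wordMatrix_bounds ht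
    obtain ⟨-, -, hle', -⟩ := wordMatrix_bounds ht'
    have hdiff : wordMatrix t' 1 0 - wordMatrix t 1 0 = 0 := by
      have hdvd : wordMatrix t 0 0 ∣ wordMatrix t' 1 0 - wordMatrix t 1 0 :=
        ⟨b - b', by linear_combination -e₀₀⟩
      refine Int.eq_zero_of_abs_lt_dvd hdvd (abs_lt.mpr ⟨?_, ?_⟩)
      · linarith [one_le_wordMatrix_one_zero ht' hnil']
      · linarith [one_le_wordMatrix_one_zero ht hnil]
    refine mul_right_cancel₀ (by omega : wordMatrix t 0 0 ≠ 0) ?_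
    linear_combination e₀₀ + hdiff
  subst hbb
  rw [e₁₁] at e₀₁
  refine ⟨rfl, ?_⟩
  ext i j
  fin_cases i <;> fin_cases j <;> simp <;> linarith

lemma wordMatrix_eq_one_iff (hs : ∀ b ∈ s, 0 < b) : wordMatrix s = 1 ↔ s = [] := by
  refine ⟨fun h ↦ ?_, by rintro rfl; rfl⟩
  by_contra hne
  have h₁₀ := one_le_wordMatrix_one_zero hs hne
  simp [h] at h₁₀

lemma wordMatrix_injOn : Set.InjOn wordMatrix {s | ∀ b ∈ s, 0 < b} := by
  intro s hs s' hs' h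
  induction s generalizing s' with
  | nil => exact ((wordMatrix_eq_one_iff hs').mp h.symm).symm
  | cons b t ih =>
    cases s' with
    | nil => exact (wordMatrix_eq_one_iff hs).mp h
    | cons b' t' =>
      have ht : ∀ c ∈ t, 0 < c := fun c hc ↦ hs c (List.mem_cons_of_mem b hc)
      have ht' : ∀ c ∈ t', 0 < c := fun c hc ↦ hs' c (List.mem_cons_of_mem b' hc)
      obtain ⟨rfl, htt'⟩ := eq_and_wordMatrix_eq_of_wordMatrix_cons_eq ht ht' h
      rw [ih ht ht' htt']

/-- `wordMatrix t` is a priori only `± wordMatrix s`; positivity of the top-left entries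
excludes the minus sign. -/
lemma eq_of_wordMatrix_mul_adjugate_eq_one (hs : ∀ b ∈ s, 0 < b) (ht : ∀ b ∈ t, 0 < b)
    (h : wordMatrix s * (wordMatrix t).adjugate = 1) : s = t := by
  have h' : (wordMatrix t).adjugate * wordMatrix s = 1 := mul_eq_one_comm.mp h
  have hsmul : wordMatrix t = (wordMatrix t).det • wordMatrix s := by
    calc wordMatrix t = wordMatrix t * ((wordMatrix t).adjugate * wordMatrix s) := by
          rw [h', mul_one]
      _ = (wordMatrix t).det • wordMatrix s := by
          rw [← mul_assoc, mul_adjugate, smul_mul, one_mul]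
  have hdet : (wordMatrix t).det = 1 := by
    rw [det_wordMatrix] at hsmul ⊢
    refine (neg_one_pow_eq_or ℤ _).resolve_right fun hneg ↦ ?_
    have h₀₀ := congrFun (congrFun hsmul 0) 0
    rw [hneg, neg_one_smul, neg_apply] at h₀₀
    linarith [(wordMatrix_bounds hs).1, (wordMatrix_bounds ht).1]
  exact wordMatrix_injOn hs ht (by rw [hsmul, hdet, one_smul])

end wordMatrix

lemma tendsto_max_abs_entries_cofinite_atTop :
    Tendsto (fun M : Matrix (Fin 2) (Fin 2) ℤ ↦ max (max |M 0 0| |M 0 1|) (max |M 1 0| |M 1 1|))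
      cofinite atTop := by
  refine tendsto_atTop.mpr fun b ↦ eventually_cofinite.mpr ?_
  refine (Set.Finite.pi fun _ ↦ Set.Finite.pi fun _ ↦ Set.finite_Icc (-b) b).subset ?_
  intro M hM i _ j _
  simp only [not_le, max_lt_iff] at hM
  obtain ⟨⟨h₀₀, h₀₁⟩, h₁₀, h₁₁⟩ := hM
  rw [Set.mem_Icc, ← abs_le]
  fin_cases i <;> fin_cases j <;> [exact h₀₀.le; exact h₀₁.le; exact h₁₀.le; exact h₁₁.le]

lemma IsCFOf.pos_succ {α : ℝ} {a : ℕ → ℤ} (hcf : IsCFOf α a) (hα : Irrational α) (n : ℕ) :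
    0 < a (n + 1) := by
  obtain ⟨x, hx₀, hxa, hxs⟩ := hcf
  have hirr : ∀ n, Irrational (x n) := by
    intro n
    induction n with
    | zero => rwa [hx₀]
    | succ n ih => rw [hxs, one_div]; exact (ih.sub_intCast _).inv
  rw [hxa, Int.floor_pos, hxs, Int.self_sub_floor]
  exact (one_lt_one_div (Int.fract_pos.mpr ((hirr n).ne_int _)) (Int.fract_lt_one _)).le

def convergentMatrix (p q : ℕ → ℤ) (n : ℕ) : Matrix (Fin 2) (Fin 2) ℤ :=
  !![p (n + 1), p n; q (n + 1), q n]

lemma Dmat_eq_mul_adjugate (p q p' q' : ℕ → ℤ) (k l : ℕ) :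
    Dmat p q p' q' k l = convergentMatrix p q k * (convergentMatrix p' q' l).adjugate := by
  rw [Dmat, convergentMatrix, convergentMatrix, adjugate_fin_two_of]

namespace IsConvergentsOf

variable {a p q : ℕ → ℤ}

lemma convergentMatrix_succ (h : IsConvergentsOf a p q) (n : ℕ) :
    convergentMatrix p q (n + 1) = convergentMatrix p q n * cfMatrix (a (n + 1)) := by
  obtain ⟨-, -, hp, -, -, hq⟩ := h
  rw [convergentMatrix, convergentMatrix, cfMatrix, mul_fin_two, hp, hq]
  simp only [mul_one, mul_zero, add_zero, mul_comm (a (n + 1))]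

lemma det_convergentMatrix (h : IsConvergentsOf a p q) (n : ℕ) :
    (convergentMatrix p q n).det = (-1) ^ (n + 1) := by
  induction n with
  | zero =>
    obtain ⟨hp₀, hp₁, -, hq₀, hq₁, -⟩ := h
    simp [convergentMatrix, det_fin_two_of, hp₀, hq₀, hq₁]
  | succ n ih =>
    rw [h.convergentMatrix_succ, det_mul, ih, cfMatrix, det_fin_two_of]
    ring

lemma isUnit_convergentMatrix (h : IsConvergentsOf a p q) (n : ℕ) :
    IsUnit (convergentMatrix p q n) := by
  rw [isUnit_iff_isUnit_det, h.det_convergentMatrix]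
  exact isUnit_neg_one.pow _

lemma isUnit_adjugate_convergentMatrix (h : IsConvergentsOf a p q) (n : ℕ) :
    IsUnit (convergentMatrix p q n).adjugate := by
  rw [isUnit_iff_isUnit_det, det_adjugate, Fintype.card_fin, pow_one, h.det_convergentMatrix]
  exact isUnit_neg_one.pow _

lemma exists_convergentMatrix_eq_mul (h : IsConvergentsOf a p q) (ha : ∀ n, 0 < a (n + 1))
    {k₁ k₂ : ℕ} (hk : k₁ < k₂) : ∃ u : List ℤ, (∀ b ∈ u ++ [a k₂], 0 < b) ∧
      convergentMatrix p q k₂ = convergentMatrix p q k₁ * wordMatrix (u ++ [a k₂]) := by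
  induction k₂, hk using Nat.le_induction with
  | base => exact ⟨[], by simpa using ha k₁, by simp [h.convergentMatrix_succ, wordMatrix_cons]⟩
  | succ n hn ih =>
    obtain ⟨u, hu, hC⟩ := ih
    refine ⟨u ++ [a n], ?_, ?_⟩
    · simp only [List.mem_append, List.mem_singleton]
      rintro b ((hb | rfl) | rfl)
      exacts [hu b (by simp [hb]), hu _ (by simp), ha n]
    · simp [h.convergentMatrix_succ, hC, wordMatrix_cons, mul_assoc]

lemma det_Dmat {a' p' q' : ℕ → ℤ} (h : IsConvergentsOf a p q) (h' : IsConvergentsOf a' p' q')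
    (k l : ℕ) : (Dmat p q p' q' k l).det = (-1) ^ (k + l) := by
  rw [Dmat_eq_mul_adjugate, det_mul, det_adjugate, Fintype.card_fin, pow_one,
    h.det_convergentMatrix, h'.det_convergentMatrix]
  ring

lemma eq_of_Dmat_eq {a' p' q' : ℕ → ℤ} (h : IsConvergentsOf a p q)
    (h' : IsConvergentsOf a' p' q') (ha : ∀ n, 0 < a (n + 1)) (ha' : ∀ n, 0 < a' (n + 1))
    {k₁ k₂ l₁ l₂ : ℕ} (hk : k₁ < k₂) (hl : l₁ < l₂)
    (heq : Dmat p q p' q' k₁ l₁ = Dmat p q p' q' k₂ l₂) : a k₂ = a' l₂ := by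
  obtain ⟨u, hu, hCu⟩ := h.exists_convergentMatrix_eq_mul ha hk
  obtain ⟨u', hu', hCu'⟩ := h'.exists_convergentMatrix_eq_mul ha' hl
  rw [Dmat_eq_mul_adjugate, Dmat_eq_mul_adjugate, hCu, hCu', adjugate_mul_distrib] at heq
  have hW : wordMatrix (u ++ [a k₂]) * (wordMatrix (u' ++ [a' l₂])).adjugate = 1 := by
    refine ((h.isUnit_convergentMatrix k₁).mul_left_cancel
      ((h'.isUnit_adjugate_convergentMatrix l₁).mul_right_cancel ?_)).symm
    rw [mul_one, heq]
    noncomm_ring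
  have hw := eq_of_wordMatrix_mul_adjugate_eq_one hu hu' hW
  exact List.singleton_inj.mp (List.append_inj' hw rfl).2

end IsConvergentsOf

theorem stmt19_general (α α' : ℝ) (hα : Irrational α) (hα' : Irrational α')
    (a a' : ℕ → ℤ) (hcf : IsCFOf α a) (hcf' : IsCFOf α' a')
    (p q p' q' : ℕ → ℤ) (h : IsConvergentsOf a p q) (h' : IsConvergentsOf a' p' q')
    (k l : ℕ → ℕ)
    (hnorm : ∀ j, 3 ≤ min (k j) (l j) → a (k j) ≠ a' (l j)) :
    (∀ j, (Dmat p q p' q' (k j) (l j)).det = 1 ∨ (Dmat p q p' q' (k j) (l j)).det = -1) ∧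
    (StrictMono k → StrictMono l →
      Filter.Tendsto (fun j =>
        max (max |Dmat p q p' q' (k j) (l j) 0 0| |Dmat p q p' q' (k j) (l j) 0 1|)
            (max |Dmat p q p' q' (k j) (l j) 1 0| |Dmat p q p' q' (k j) (l j) 1 1|))
        Filter.atTop Filter.atTop) := by
  refine ⟨fun j ↦ h.det_Dmat h' _ _ ▸ neg_one_pow_eq_or ℤ _, fun hk hl ↦ ?_⟩
  have hinj : Function.Injective fun j ↦ Dmat p q p' q' (k (j + 3)) (l (j + 3)) := by
    refine Function.Injective.of_lt_imp_ne fun i j hij heq ↦ hnorm (j + 3) ?_ ?_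
    · exact le_min ((Nat.le_add_left 3 j).trans (hk.id_le _))
        ((Nat.le_add_left 3 j).trans (hl.id_le _))
    · exact h.eq_of_Dmat_eq h' (hcf.pos_succ hα) (hcf'.pos_succ hα') (hk (by omega))
        (hl (by omega)) heq
  rw [← tendsto_add_atTop_iff_nat 3]
  exact tendsto_max_abs_entries_cofinite_atTop.comp
    (Nat.cofinite_eq_atTop ▸ hinj.tendsto_cofinite)

/-- along an infinite family of triples `(kⱼ, lⱼ, mⱼ)` with
matching blocks `a_{kⱼ+1}⋯a_{kⱼ+mⱼ} = a′_{lⱼ+1}⋯a′_{lⱼ+mⱼ}` and the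
normalization `a_{kⱼ} ≠ a′_{lⱼ}` whenever `min(kⱼ,lⱼ) ≥ 3`, the matrices
`Dmat` have determinant `±1`, and if `k` and `l` are strictly increasing then
the maximum of the absolute values of the four entries tends to infinity. -/
theorem stmt19 (α α' : ℝ) (hα : Irrational α) (hα' : Irrational α')
    (a a' : ℕ → ℤ) (hcf : IsCFOf α a) (hcf' : IsCFOf α' a')
    (p q p' q' : ℕ → ℤ) (h : IsConvergentsOf a p q) (h' : IsConvergentsOf a' p' q')
    (k l m : ℕ → ℕ) (hm : ∀ j, 1 ≤ m j)
    (hagree : ∀ j, ∀ i, 1 ≤ i → i ≤ m j → a (k j + i) = a' (l j + i))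
    (hnorm : ∀ j, 3 ≤ min (k j) (l j) → a (k j) ≠ a' (l j)) :
    (∀ j, (Dmat p q p' q' (k j) (l j)).det = 1 ∨ (Dmat p q p' q' (k j) (l j)).det = -1) ∧
    (StrictMono k → StrictMono l →
      Filter.Tendsto (fun j =>
        max (max |Dmat p q p' q' (k j) (l j) 0 0| |Dmat p q p' q' (k j) (l j) 0 1|)
            (max |Dmat p q p' q' (k j) (l j) 1 0| |Dmat p q p' q' (k j) (l j) 1 1|))
        Filter.atTop Filter.atTop) :=
  stmt19_general α α' hα hα' a a' hcf hcf' p q p' q' h h' k l hnorm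
end
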